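/- Let 0 < α < 1, β > 0, and define c₁(β) = -2(1-α)²/η(β)² - α², and φ(x;β) = (c₁(β) - αx)U'(x;β) - 2α for -1 ≤ x ≤ -α, φ(x;β) = 2x for |x| < α, and φ(x;β) = (c₁(β) + αx)U'(x;β) + 2α for α ≤ x ≤ 1. Then φ(·;β) is an odd C¹ function on [-1,1] and satisfies φ'' + Λ(β) h(x,α) e^{U(x;β)} φ = 0 on (-1,1)\{-α,α}. -/

import Mathlib

/-!
Away from `[-α, α]` the profile `U` is an affine rescaling of `w`, which solves Liouville's
equation `w'' + e^w = 0`; hence `U'' + Λ e^U = 0` there. The linearisation `ψ'' + Λ e^u ψ = 0`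
of Liouville's equation is solved by the infinitesimal generators of its two symmetries,
translation (`u'`) and scaling (`x u' + 2`), and `φ = c₁ U' + α (x U' + 2)` is such a
combination on `[α, 1]`. On `(-α, α)` both terms vanish, as `φ = 2x` and `h = 0`. The constant
`c₁` makes the two pieces match to first order at `α`, and oddness carries everything to `-α`.
-/

open Set

noncomputable def w (x : ℝ) : ℝ := Real.log (1 - Real.tanh (x / Real.sqrt 2) ^ 2)

noncomputable def artanh (x : ℝ) : ℝ := (1 / 2) * Real.log ((1 + x) / (1 - x))

noncomputable def eta (β : ℝ) : ℝ := Real.sqrt 2 * artanh (Real.sqrt (1 - Real.exp (-β)))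

noncomputable def Lam (α β : ℝ) : ℝ := (1 - α) ^ (-2 : ℤ) * Real.exp (-β) * (eta β) ^ 2

noncomputable def step (α x : ℝ) : ℝ := if |x| < α then 0 else 1

noncomputable def U (α β x : ℝ) : ℝ :=
  if |x| < α then β else w (eta β * (|x| - α) / (1 - α)) + β

noncomputable def c₁ (α β : ℝ) : ℝ := -2 * (1 - α) ^ 2 / (eta β) ^ 2 - α ^ 2

noncomputable def phi (α β x : ℝ) : ℝ :=
  if x ≤ -α then (c₁ α β - α * x) * deriv (U α β) x - 2 * α
  else if x < α then 2 * x
  else (c₁ α β + α * x) * deriv (U α β) x + 2 * α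

open Filter Topology

lemma one_sub_tanh_sq_eq (x : ℝ) : 1 - Real.tanh x ^ 2 = (Real.cosh x ^ 2)⁻¹ := by
  have hc := (Real.cosh_pos x).ne'
  rw [Real.tanh_eq_sinh_div_cosh, div_pow]
  field_simp
  linarith [Real.cosh_sq_sub_sinh_sq x]

lemma one_sub_tanh_sq_pos (x : ℝ) : 0 < 1 - Real.tanh x ^ 2 := by
  rw [one_sub_tanh_sq_eq]
  have := Real.cosh_pos x
  positivity

lemma hasDerivAt_tanh (x : ℝ) : HasDerivAt Real.tanh (1 - Real.tanh x ^ 2) x := by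
  have h := (Real.hasDerivAt_sinh x).div (Real.hasDerivAt_cosh x) (Real.cosh_pos x).ne'
  rw [one_sub_tanh_sq_eq, show Real.tanh = Real.sinh / Real.cosh from
    funext Real.tanh_eq_sinh_div_cosh]
  refine h.congr_deriv ?_
  field_simp
  linarith [Real.cosh_sq_sub_sinh_sq x]

lemma hasDerivAt_tanh_div_sqrt_two (t : ℝ) :
    HasDerivAt (fun t => Real.tanh (t / Real.sqrt 2))
      ((1 - Real.tanh (t / Real.sqrt 2) ^ 2) / Real.sqrt 2) t :=
  ((hasDerivAt_tanh _).comp t ((hasDerivAt_id t).div_const (Real.sqrt 2))).congr_deriv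
    (by simp [div_eq_mul_inv])

structure IsLiouvilleSolution (Λ : ℝ) (u u' : ℝ → ℝ) : Prop where
  hasDerivAt : ∀ x, HasDerivAt u (u' x) x
  hasDerivAt_deriv : ∀ x, HasDerivAt u' (-Λ * Real.exp (u x)) x

lemma isLiouvilleSolution_w :
    IsLiouvilleSolution 1 w (fun t => -Real.sqrt 2 * Real.tanh (t / Real.sqrt 2)) where
  hasDerivAt t := by
    have h : HasDerivAt (fun t => Real.log (1 - Real.tanh (t / Real.sqrt 2) ^ 2)) _ t :=
      (((hasDerivAt_tanh_div_sqrt_two t).pow 2).const_sub 1).log (one_sub_tanh_sq_pos _).ne'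
    refine h.congr_deriv ?_
    have := (one_sub_tanh_sq_pos (t / Real.sqrt 2)).ne'
    simp only [Pi.pow_apply]
    field_simp
    rw [Real.sq_sqrt zero_le_two]
    ring
  hasDerivAt_deriv t := by
    refine ((hasDerivAt_tanh_div_sqrt_two t).const_mul (-Real.sqrt 2)).congr_deriv ?_
    rw [w, Real.exp_log (one_sub_tanh_sq_pos _)]
    field_simp

/-- The infinitesimal variations of `u` under the translations `x ↦ x + t` and the scalings
`u(x) ↦ u(e^t x) + 2t`, which both preserve `u'' + Λ e^u = 0`. -/
def jacobiField (u' : ℝ → ℝ) (a b x : ℝ) : ℝ := a * u' x + b * (x * u' x + 2)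

namespace IsLiouvilleSolution

variable {Λ : ℝ} {u u' : ℝ → ℝ}

lemma comp_affine (h : IsLiouvilleSolution Λ u u') (s x₀ c : ℝ) :
    IsLiouvilleSolution (s ^ 2 * Real.exp (-c) * Λ) (fun x => u (s * (x - x₀)) + c)
      (fun x => s * u' (s * (x - x₀))) := by
  have hlin (x : ℝ) : HasDerivAt (fun x => s * (x - x₀)) s x := by
    simpa using ((hasDerivAt_id x).sub_const x₀).const_mul s
  refine ⟨fun x => ?_, fun x => ?_⟩
  · simpa [mul_comm] using ((h.hasDerivAt _).comp x (hlin x)).add_const c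
  · refine (((h.hasDerivAt_deriv _).comp x (hlin x)).const_mul s).congr_deriv ?_
    rw [Real.exp_add, Real.exp_neg]
    field_simp

lemma hasDerivAt_jacobiField (h : IsLiouvilleSolution Λ u u') (a b x : ℝ) :
    HasDerivAt (jacobiField u' a b) ((a + b * x) * (-Λ * Real.exp (u x)) + b * u' x) x := by
  have hd := h.hasDerivAt_deriv x
  refine ((hd.const_mul a).add ((((hasDerivAt_id x).mul hd).add_const 2).const_mul b)).congr_deriv
    ?_
  simp only [id]
  ring

lemma deriv_jacobiField (h : IsLiouvilleSolution Λ u u') (a b : ℝ) :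
    deriv (jacobiField u' a b) = fun x => (a + b * x) * (-Λ * Real.exp (u x)) + b * u' x :=
  funext fun x => (h.hasDerivAt_jacobiField a b x).deriv

lemma contDiff_jacobiField (h : IsLiouvilleSolution Λ u u') (a b : ℝ) :
    ContDiff ℝ 1 (jacobiField u' a b) := by
  have hu : Continuous u := continuous_iff_continuousAt.2 fun x => (h.hasDerivAt x).continuousAt
  have hu' : Continuous u' :=
    continuous_iff_continuousAt.2 fun x => (h.hasDerivAt_deriv x).continuousAt
  rw [contDiff_one_iff_deriv, h.deriv_jacobiField]
  exact ⟨fun x => (h.hasDerivAt_jacobiField a b x).differentiableAt, by fun_prop⟩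

lemma deriv_deriv_jacobiField (h : IsLiouvilleSolution Λ u u') (a b x : ℝ) :
    deriv (deriv (jacobiField u' a b)) x + Λ * Real.exp (u x) * jacobiField u' a b x = 0 := by
  have hd : HasDerivAt (fun x => (a + b * x) * (-Λ * Real.exp (u x)) + b * u' x) _ x :=
    ((((hasDerivAt_id x).const_mul b).const_add a).mul
      (((h.hasDerivAt x).exp).const_mul (-Λ))).add ((h.hasDerivAt_deriv x).const_mul b)
  rw [h.deriv_jacobiField, hd.deriv, jacobiField]
  simp only [id]
  ring

end IsLiouvilleSolution

lemma hasDerivAt_of_eventuallyEq_Iic_Ici {f g₁ g₂ : ℝ → ℝ} {a d : ℝ}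
    (h₁ : HasDerivAt g₁ d a) (h₂ : HasDerivAt g₂ d a)
    (hf₁ : f =ᶠ[𝓝[≤] a] g₁) (hf₂ : f =ᶠ[𝓝[≥] a] g₂) : HasDerivAt f d a := by
  have h := (h₁.hasDerivWithinAt.congr_of_eventuallyEq hf₁
    (hf₁.eq_of_nhdsWithin self_mem_Iic)).union
    (h₂.hasDerivWithinAt.congr_of_eventuallyEq hf₂ (hf₂.eq_of_nhdsWithin self_mem_Ici))
  rw [Iic_union_Ici] at h
  exact h.hasDerivAt univ_mem

lemma contDiff_one_of_eqOn_Iic_Ici {f g₁ g₂ : ℝ → ℝ} {a : ℝ}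
    (h₁ : ContDiff ℝ 1 g₁) (h₂ : ContDiff ℝ 1 g₂)
    (hf₁ : EqOn f g₁ (Iic a)) (hf₂ : EqOn f g₂ (Ici a)) (hd : deriv g₁ a = deriv g₂ a) :
    ContDiff ℝ 1 f := by
  have hderiv (x : ℝ) : HasDerivAt f (if x ≤ a then deriv g₁ x else deriv g₂ x) x := by
    have hg₁ := (h₁.differentiable one_ne_zero x).hasDerivAt
    have hg₂ := (h₂.differentiable one_ne_zero x).hasDerivAt
    rcases lt_trichotomy x a with hx | rfl | hx
    · rw [if_pos hx.le]
      exact hg₁.congr_of_eventuallyEq (eventually_of_mem (Iio_mem_nhds hx)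
        fun y hy => hf₁ (mem_Iic.2 (le_of_lt hy)))
    · rw [if_pos le_rfl]
      exact hasDerivAt_of_eventuallyEq_Iic_Ici hg₁ (hd ▸ hg₂)
        (eventuallyEq_nhdsWithin_of_eqOn hf₁) (eventuallyEq_nhdsWithin_of_eqOn hf₂)
    · rw [if_neg (not_le.2 hx)]
      exact hg₂.congr_of_eventuallyEq (eventually_of_mem (Ioi_mem_nhds hx)
        fun y hy => hf₂ (mem_Ici.2 (le_of_lt hy)))
  rw [contDiff_one_iff_deriv, funext fun x => (hderiv x).deriv]
  exact ⟨fun x => (hderiv x).differentiableAt, Continuous.if_le (h₁.continuous_deriv le_rfl)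
    (h₂.continuous_deriv le_rfl) continuous_id continuous_const fun x hx => hx ▸ hd⟩

lemma Function.Even.deriv {f : ℝ → ℝ} (hf : Function.Even f) : Function.Odd (deriv f) := by
  intro x
  have h := deriv_comp_neg (f := f) (x := -x)
  rw [show (fun x => f (-x)) = f from funext hf, neg_neg] at h
  linarith

lemma Function.Odd.deriv {f : ℝ → ℝ} (hf : Function.Odd f) : Function.Even (deriv f) := by
  intro x
  have h := deriv_comp_neg (f := f) (x := -x)
  rw [show (fun x => f (-x)) = -f from funext hf, deriv.neg, neg_neg] at h
  linarith

lemma eta_pos {β : ℝ} (hβ : 0 < β) : 0 < eta β := by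
  have h0 : 0 < 1 - Real.exp (-β) := by
    linarith [Real.exp_lt_one_iff.2 (neg_lt_zero.2 hβ)]
  have h1 : 1 - Real.exp (-β) < 1 := by linarith [Real.exp_pos (-β)]
  have hs : Real.sqrt (1 - Real.exp (-β)) ∈ Ioo (0 : ℝ) 1 :=
    ⟨Real.sqrt_pos.2 h0, by simpa using Real.sqrt_lt_sqrt h0.le h1⟩
  rw [eta, artanh, ← Real.artanh_eq_half_log ⟨by linarith [hs.1], hs.2.le⟩]
  exact mul_pos (by positivity) (Real.artanh_pos hs)

section Profile

variable (α β : ℝ)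

noncomputable def outerU (x : ℝ) : ℝ := w (eta β / (1 - α) * (x - α)) + β

noncomputable def outerU' (x : ℝ) : ℝ :=
  eta β / (1 - α) * (-Real.sqrt 2 * Real.tanh (eta β / (1 - α) * (x - α) / Real.sqrt 2))

lemma isLiouvilleSolution_outerU : IsLiouvilleSolution (Lam α β) (outerU α β) (outerU' α β) := by
  rw [show Lam α β = (eta β / (1 - α)) ^ 2 * Real.exp (-β) * 1 by
    rw [Lam, zpow_neg, zpow_ofNat, div_pow]; ring]
  exact isLiouvilleSolution_w.comp_affine _ α β

lemma outerU'_self : outerU' α β α = 0 := by simp [outerU']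

lemma outerU_self : outerU α β α = β := by simp [outerU, w]

lemma U_even : Function.Even (U α β) := fun x => by rw [U, U, abs_neg]

variable {α}

lemma U_eq_outerU (hα : 0 ≤ α) {x : ℝ} (hx : α ≤ x) : U α β x = outerU α β x := by
  rw [U, if_neg (by rw [abs_of_nonneg (hα.trans hx)]; exact not_lt.2 hx),
    abs_of_nonneg (hα.trans hx), outerU, div_mul_eq_mul_div]

lemma U_eq_of_abs_le {x : ℝ} (hx : |x| ≤ α) : U α β x = β := by
  rw [U]
  split_ifs with h
  · rfl
  · rw [le_antisymm hx (not_lt.1 h), sub_self, mul_zero, zero_div]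
    simp [w]

lemma hasDerivAt_U (hα : 0 < α) {x : ℝ} (hx : α ≤ x) :
    HasDerivAt (U α β) (outerU' α β x) x := by
  have hV := (isLiouvilleSolution_outerU α β).hasDerivAt x
  rcases hx.eq_or_lt with rfl | hx
  · refine hasDerivAt_of_eventuallyEq_Iic_Ici (g₁ := fun _ => β)
      (by rw [outerU'_self]; exact hasDerivAt_const _ β) hV ?_
      (eventually_nhdsWithin_of_forall fun y hy => U_eq_outerU β hα.le hy)
    filter_upwards [nhdsWithin_le_nhds (Ioi_mem_nhds (neg_lt_self hα)), self_mem_nhdsWithin]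
      with y hy₁ hy₂
    exact U_eq_of_abs_le β (abs_le.2 ⟨le_of_lt hy₁, hy₂⟩)
  · exact hV.congr_of_eventuallyEq
      (eventually_of_mem (Ioi_mem_nhds hx) fun y hy => U_eq_outerU β hα.le (le_of_lt hy))

end Profile

section Phi

variable {α : ℝ} (β : ℝ)

lemma phi_eq_jacobiField (hα : 0 < α) {x : ℝ} (hx : α ≤ x) :
    phi α β x = jacobiField (outerU' α β) (c₁ α β) α x := by
  rw [phi, if_neg (by linarith), if_neg (not_lt.2 hx), (hasDerivAt_U β hα hx).deriv, jacobiField]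
  ring

lemma phi_odd (hα : 0 < α) : Function.Odd (phi α β) := by
  intro x
  have hU := (U_even α β).deriv x
  unfold phi
  rw [hU]
  split_ifs <;> first | ring1 | (exfalso; linarith)

lemma jacobiField_outerU'_self : jacobiField (outerU' α β) (c₁ α β) α α = 2 * α := by
  simp [jacobiField, outerU'_self, mul_comm]

lemma deriv_jacobiField_outerU'_self (hα : α ≠ 1) (hη : eta β ≠ 0) :
    deriv (jacobiField (outerU' α β) (c₁ α β) α) α = 2 := by
  have h1 : 1 - α ≠ 0 := sub_ne_zero.2 (Ne.symm hα)
  rw [(isLiouvilleSolution_outerU α β).deriv_jacobiField]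
  beta_reduce
  rw [outerU'_self, outerU_self, Lam, c₁, zpow_neg, zpow_ofNat, Real.exp_neg]
  field_simp
  ring

lemma contDiff_phi (hα : 0 < α) (hα₁ : α ≠ 1) (hη : eta β ≠ 0) : ContDiff ℝ 1 (phi α β) := by
  set ψ := jacobiField (outerU' α β) (c₁ α β) α
  set M : ℝ → ℝ := fun x => if x ≤ α then 2 * x else ψ x
  have hM_right : EqOn M ψ (Ici α) := fun x hx => by
    rcases (mem_Ici.1 hx).eq_or_lt with rfl | hx
    · simp [M, ψ, jacobiField_outerU'_self]
    · exact if_neg (not_le.2 hx)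
  have hM : ContDiff ℝ 1 M :=
    contDiff_one_of_eqOn_Iic_Ici (contDiff_const.mul contDiff_id)
      ((isLiouvilleSolution_outerU α β).contDiff_jacobiField _ _) (fun x hx => if_pos hx)
      hM_right (by simp [deriv_jacobiField_outerU'_self β hα₁ hη])
  have hphi_right : EqOn (phi α β) M (Ici 0) := fun x hx => by
    rcases lt_or_ge x α with hxα | hxα
    · rw [phi, if_neg (by linarith [mem_Ici.1 hx]), if_pos hxα]
      exact (if_pos hxα.le).symm
    · rw [phi_eq_jacobiField β hα hxα, hM_right hxα]
  -- By oddness, the junction at `-α` mirrors the one at `α`: glue `M` to its reflection at `0`.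
  refine contDiff_one_of_eqOn_Iic_Ici (hM.comp contDiff_neg).neg hM (a := 0)
    (fun x hx => ?_) hphi_right (by simp [deriv_comp_neg])
  rw [← neg_neg (phi α β x), ← phi_odd β hα x, hphi_right (mem_Ici.2 (neg_nonneg.2 hx))]
  rfl

lemma phi_ode_of_lt (hα : 0 < α) {x : ℝ} (hx : α < x) :
    deriv (deriv (phi α β)) x + Lam α β * step α x * Real.exp (U α β x) * phi α β x = 0 := by
  have heq : phi α β =ᶠ[𝓝 x] jacobiField (outerU' α β) (c₁ α β) α :=
    eventually_of_mem (Ioi_mem_nhds hx) fun y hy => phi_eq_jacobiField β hα (le_of_lt hy)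
  rw [heq.deriv.deriv_eq, heq.eq_of_nhds, U_eq_outerU β hα.le hx.le, step,
    if_neg (by rw [abs_of_pos (hα.trans hx)]; exact not_lt.2 hx.le), mul_one]
  exact (isLiouvilleSolution_outerU α β).deriv_deriv_jacobiField _ _ x

lemma phi_ode_of_abs_lt {x : ℝ} (hx : |x| < α) :
    deriv (deriv (phi α β)) x + Lam α β * step α x * Real.exp (U α β x) * phi α β x = 0 := by
  have heq : phi α β =ᶠ[𝓝 x] fun y => 2 * y := by
    filter_upwards [Ioo_mem_nhds (abs_lt.1 hx).1 (abs_lt.1 hx).2] with y hy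
    rw [phi, if_neg (not_le.2 hy.1), if_pos hy.2]
  rw [heq.deriv.deriv_eq, step, if_pos hx]
  simp

lemma phi_ode (hα : 0 < α) {x : ℝ} (hx₁ : x ≠ -α) (hx₂ : x ≠ α) :
    deriv (deriv (phi α β)) x + Lam α β * step α x * Real.exp (U α β x) * phi α β x = 0 := by
  rcases hx₂.lt_or_gt with hx₂ | hx₂
  · rcases hx₁.lt_or_gt with hx₁ | hx₁
    · have h := phi_ode_of_lt β hα (lt_neg_of_lt_neg hx₁)
      rw [(phi_odd β hα).deriv.deriv, phi_odd β hα, U_even, step, abs_neg] at h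
      rw [step]
      linarith
    · exact phi_ode_of_abs_lt β (abs_lt.2 ⟨hx₁, hx₂⟩)
  · exact phi_ode_of_lt β hα hx₂

end Phi

theorem stmt_18 (α β : ℝ) (hα : 0 < α ∧ α < 1) (hβ : 0 < β) :
    (∀ x ∈ Icc (-1 : ℝ) 1, phi α β (-x) = -phi α β x) ∧
    ContDiffOn ℝ 1 (phi α β) (Icc (-1) 1) ∧
    (∀ x ∈ Ioo (-1 : ℝ) 1 \ {-α, α},
      deriv (deriv (phi α β)) x
        + Lam α β * step α x * Real.exp (U α β x) * phi α β x = 0) := by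
  obtain ⟨hα₀, hα₁⟩ := hα
  refine ⟨fun x _ => phi_odd β hα₀ x,
    (contDiff_phi β hα₀ hα₁.ne (eta_pos hβ).ne').contDiffOn, fun x hx => ?_⟩
  simp only [Set.mem_sdiff, mem_insert_iff, mem_singleton_iff, not_or] at hx
  exact phi_ode β hα₀ hx.2.1 hx.2.2
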